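/- arXiv:math/0501404 — 3 statements merged into one kernel-verified Lean document; each statement's English description precedes it below -/
import Mathlib

section
/- Let L be a join-semidistributive lattice and let p, q be distinct completely join-irreducible elements of L. Then there is no x ∈ L with p ≰ x, p_* ∨ q_* ≤ x, and p ∨ x = q ∨ x (i.e., the relation p D⁰ q never holds). -/
/-- `p` is completely join-irreducible with unique lower cover `pstar`. -/
def IsCJI {L : Type*} [Lattice L] (p pstar : L) : Prop :=
  pstar < p ∧ ∀ x < p, x ≤ pstar

/-- In a join-semidistributive lattice, the relation `p D⁰ q` never holds for distinct
completely join-irreducible elements `p` and `q`. -/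
theorem no_D0_of_joinSemidistributive {L : Type*} [Lattice L]
    (hSD : ∀ x y z : L, x ⊔ y = x ⊔ z → x ⊔ y = x ⊔ (y ⊓ z))
    (p pstar q qstar : L) (hp : IsCJI p pstar) (hq : IsCJI q qstar) (hpq : p ≠ q) :
    ¬ ∃ x : L, ¬ p ≤ x ∧ pstar ⊔ qstar ≤ x ∧ p ⊔ x = q ⊔ x := by
  rintro ⟨x, hpx, hstar, heq⟩
  have hps : pstar ≤ x := le_trans le_sup_left hstar
  have hqs : qstar ≤ x := le_trans le_sup_right hstar
  by_cases hle : p ≤ q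
  · have hlt : p < q := lt_of_le_of_ne hle hpq
    exact hpx (le_trans (hq.2 p hlt) hqs)
  · have hlt : p ⊓ q < p := lt_of_le_of_ne inf_le_left (fun h => hle (h ▸ inf_le_right))
    have h1 : x ⊔ p = x ⊔ (p ⊓ q) := hSD x p q (by rw [sup_comm x p, sup_comm x q]; exact heq)
    have h2 : p ⊓ q ≤ x := le_trans (hp.2 _ hlt) hps
    have : x ⊔ p = x := by rw [h1, sup_eq_left.mpr h2]
    exact hpx (le_trans le_sup_right this.le)
end

section
/- Let L be a lattice with the weak minimal join-cover refinement property, let p be a join-irreducible element of L, and define dₚ : {(x,y) ∈ L² : x ≤ y} → ℤ⁺ ∪ {∞} by: dₚ(x,y) = 0 if J(x) ∩ [p]^⊴ = J(y) ∩ [p]^⊴; dₚ(x,y) = 1 if p ∈ J(y)∖J(x) and J(x) ∩ [p]^◁ = J(y) ∩ [p]^◁; dₚ(x,y) = ∞ if J(x) ∩ [p]^◁ ⊊ J(y) ∩ [p]^◁. Then dₚ satisfies dₚ(x∧y, x) = dₚ(y, x∨y) for all x, y ∈ L. -/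
section
variable {L : Type*} [Lattice L]

def IsJoinCover (a : L) (X : Finset L) : Prop :=
  (∀ x ∈ X, ¬ IsBot x) ∧ ∃ h : X.Nonempty, a ≤ X.sup' h id

def IsNontrivialJoinCover (a : L) (X : Finset L) : Prop :=
  IsJoinCover a X ∧ ∀ x ∈ X, ¬ a ≤ x

def Refines (X Y : Finset L) : Prop := ∀ x ∈ X, ∃ y ∈ Y, x ≤ y

def IsMinimalNontrivialJoinCover (a : L) (X : Finset L) : Prop :=
  IsNontrivialJoinCover a X ∧
    ∀ Y : Finset L, IsNontrivialJoinCover a Y → Refines Y X → X ⊆ Y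

/-- The weak minimal join-cover refinement property. -/
def WMJCRP (L : Type*) [Lattice L] : Prop :=
  ∀ a : L, ¬ IsBot a → ∀ X : Finset L, IsNontrivialJoinCover a X →
    ∃ Y : Finset L, IsMinimalNontrivialJoinCover a Y ∧ Refines Y X

/-- The set of join-irreducible elements below `a`. -/
def Jset (a : L) : Set L := {q | SupIrred q ∧ q ≤ a}

/-- The join-dependency relation on join-irreducible elements. -/
def JoinDep (p q : L) : Prop :=
  SupIrred p ∧ SupIrred q ∧ p ≠ q ∧
    ∃ x : L, p ≤ q ⊔ x ∧ ∀ y < q, ¬ p ≤ y ⊔ x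

/-- `[p]^◁`, where `◁` is the transitive closure of join-dependency. -/
def trCl (p : L) : Set L := {q | Relation.TransGen JoinDep p q}

/-- `[p]^⊴`, where `⊴` is the reflexive-transitive closure of join-dependency. -/
def rtrCl (p : L) : Set L := {q | Relation.ReflTransGen JoinDep p q}

open scoped Classical in
/-- The dimension function `dₚ`. -/
noncomputable def dFun (p x y : L) : ℕ∞ :=
  if Jset x ∩ rtrCl p = Jset y ∩ rtrCl p then 0
  else if p ∈ Jset y ∧ p ∉ Jset x ∧ Jset x ∩ trCl p = Jset y ∩ trCl p then 1
  else ⊤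

lemma isBot_of_isMin' {a : L} (h : IsMin a) : IsBot a :=
  fun b => le_trans (h inf_le_left) inf_le_right

lemma minCover_supIrred {a : L} {C : Finset L}
    (hC : IsMinimalNontrivialJoinCover a C) {c : L} (hc : c ∈ C) : SupIrred c := by
  classical
  obtain ⟨⟨⟨hbot, hne, hsup⟩, hnt⟩, hmin⟩ := hC
  refine ⟨fun hmn => hbot c hc (isBot_of_isMin' hmn), ?_⟩
  intro b d hbd
  by_contra hcon
  push_neg at hcon
  obtain ⟨hb, hd⟩ := hcon
  have hblt : b < c := lt_of_le_of_ne (hbd ▸ le_sup_left) hb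
  have hdlt : d < c := lt_of_le_of_ne (hbd ▸ le_sup_right) hd
  have hbnb : ¬ IsBot b := fun h => hd (by rw [← hbd, sup_eq_right.mpr (h d)])
  have hdnb : ¬ IsBot d := fun h => hb (by rw [← hbd, sup_eq_left.mpr (h b)])
  set Y : Finset L := insert b (insert d (C.erase c)) with hY
  have hmemY : ∀ w ∈ Y, w = b ∨ w = d ∨ w ∈ C.erase c := by
    intro w hw
    simpa [hY] using hw
  have hYcov : IsNontrivialJoinCover a Y := by
    refine ⟨⟨?_, ⟨Finset.insert_nonempty _ _, ?_⟩⟩, ?_⟩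
    · intro w hw
      rcases hmemY w hw with rfl | rfl | hw'
      · exact hbnb
      · exact hdnb
      · exact hbot w (Finset.mem_of_mem_erase hw')
    · refine hsup.trans (Finset.sup'_le _ _ fun w hw => ?_)
      by_cases hwc : w = c
      · subst hwc
        exact hbd.ge.trans (sup_le (Finset.le_sup' id (by simp [hY]))
          (Finset.le_sup' id (by simp [hY])))
      · exact Finset.le_sup' id (by simp [hY, Finset.mem_erase, hwc, hw])
    · intro w hw
      rcases hmemY w hw with rfl | rfl | hw'
      · exact fun h => hnt c hc (h.trans hblt.le)
      · exact fun h => hnt c hc (h.trans hdlt.le)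
      · exact hnt w (Finset.mem_of_mem_erase hw')
  have hYref : Refines Y C := by
    intro w hw
    rcases hmemY w hw with rfl | rfl | hw'
    · exact ⟨c, hc, hblt.le⟩
    · exact ⟨c, hc, hdlt.le⟩
    · exact ⟨w, Finset.mem_of_mem_erase hw', le_refl w⟩
  have := hmin Y hYcov hYref hc
  rcases hmemY c this with rfl | rfl | h'
  · exact hb rfl
  · exact hd rfl
  · exact Finset.notMem_erase c C h'

lemma minCover_witness {a : L} {C : Finset L}
    (hC : IsMinimalNontrivialJoinCover a C) {c : L} (hc : c ∈ C) :
    ∃ z : L, a ≤ c ⊔ z ∧ ∀ y < c, ¬ a ≤ y ⊔ z := by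
  classical
  obtain ⟨⟨⟨hbot, hne, hsup⟩, hnt⟩, hmin⟩ := hC
  have herase : (C.erase c).Nonempty := by
    rw [Finset.nonempty_iff_ne_empty]
    intro h
    rcases (Finset.erase_eq_empty_iff C c).mp h with h1 | h1
    · exact Finset.notMem_empty c (h1 ▸ hc)
    · refine hnt c hc (hsup.trans (Finset.sup'_le _ _ fun w hw => ?_))
      have hwc : w = c := Finset.mem_singleton.mp (h1 ▸ hw)
      exact le_of_eq hwc
  set z : L := (C.erase c).sup' herase id with hz
  refine ⟨z, ?_, ?_⟩
  · refine hsup.trans (Finset.sup'_le _ _ fun w hw => ?_)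
    by_cases hwc : w = c
    · exact hwc ▸ le_sup_left
    · exact le_trans (Finset.le_sup' id (Finset.mem_erase.mpr ⟨hwc, hw⟩)) le_sup_right
  · intro y hy hay
    by_cases hyb : IsBot y
    · -- then a ≤ z, and C.erase c is a nontrivial cover refining C
      have haz : a ≤ z := by
        rw [sup_eq_right.mpr (hyb z)] at hay
        exact hay
      have hcov : IsNontrivialJoinCover a (C.erase c) :=
        ⟨⟨fun w hw => hbot w (Finset.mem_of_mem_erase hw), ⟨herase, haz⟩⟩,
          fun w hw => hnt w (Finset.mem_of_mem_erase hw)⟩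
      have := hmin _ hcov (fun w hw => ⟨w, Finset.mem_of_mem_erase hw, le_refl w⟩) hc
      exact Finset.notMem_erase c C this
    · set Y : Finset L := insert y (C.erase c) with hY
      have hmemY : ∀ w ∈ Y, w = y ∨ w ∈ C.erase c := by intro w hw; simpa [hY] using hw
      have hcov : IsNontrivialJoinCover a Y := by
        refine ⟨⟨?_, ⟨Finset.insert_nonempty _ _, ?_⟩⟩, ?_⟩
        · intro w hw
          rcases hmemY w hw with rfl | hw'
          · exact hyb
          · exact hbot w (Finset.mem_of_mem_erase hw')
        · refine hay.trans (sup_le (Finset.le_sup' id (by simp [hY])) ?_)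
          exact Finset.sup'_le _ _ fun w hw => Finset.le_sup' id (by simp [hY, hw])
        · intro w hw
          rcases hmemY w hw with rfl | hw'
          · exact fun h => hnt c hc (h.trans hy.le)
          · exact hnt w (Finset.mem_of_mem_erase hw')
      have hYref : Refines Y C := by
        intro w hw
        rcases hmemY w hw with rfl | hw'
        · exact ⟨c, hc, hy.le⟩
        · exact ⟨w, Finset.mem_of_mem_erase hw', le_refl w⟩
      have := hmin Y hcov hYref hc
      rcases hmemY c this with rfl | h'
      · exact absurd rfl (ne_of_gt hy)
      · exact Finset.notMem_erase c C h'

lemma cover_step (hL : WMJCRP L) {q x y : L}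
    (hq : SupIrred q) (hle : q ≤ x ⊔ y) (hx : ¬ q ≤ x) (hy : ¬ q ≤ y) :
    ∃ C : Finset L, (∃ hC : C.Nonempty, q ≤ C.sup' hC id) ∧
      ∀ c ∈ C, JoinDep q c ∧ (c ≤ x ∨ c ≤ y) := by
  classical
  have hqnb : ¬ IsBot q := fun h => hq.1 h.isMin
  have hxnb : ¬ IsBot x := fun h => hy (hle.trans (by rw [sup_eq_right.mpr (h y)]))
  have hynb : ¬ IsBot y := fun h => hx (hle.trans (by rw [sup_eq_left.mpr (h x)]))
  have hXcov : IsNontrivialJoinCover q ({x, y} : Finset L) := by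
    refine ⟨⟨?_, ⟨by simp, ?_⟩⟩, ?_⟩
    · intro w hw
      rcases Finset.mem_insert.mp hw with rfl | hw'
      · exact hxnb
      · rw [Finset.mem_singleton.mp hw']; exact hynb
    · exact hle.trans (sup_le (Finset.le_sup' id (by simp)) (Finset.le_sup' id (by simp)))
    · intro w hw
      rcases Finset.mem_insert.mp hw with rfl | hw'
      · exact hx
      · rw [Finset.mem_singleton.mp hw']; exact hy
  obtain ⟨C, hCmin, hCref⟩ := hL q hqnb _ hXcov
  obtain ⟨⟨⟨hbot, hne, hsup⟩, hnt⟩, hmin⟩ := hCmin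
  refine ⟨C, ⟨hne, hsup⟩, fun c hc => ?_⟩
  have hcxy : c ≤ x ∨ c ≤ y := by
    obtain ⟨w, hw, hcw⟩ := hCref c hc
    rcases Finset.mem_insert.mp hw with rfl | hw'
    · exact Or.inl hcw
    · exact Or.inr ((Finset.mem_singleton.mp hw') ▸ hcw)
  have hqc : q ≠ c := by
    rintro rfl
    rcases hcxy with h | h
    · exact hx h
    · exact hy h
  exact ⟨⟨hq, minCover_supIrred ⟨⟨⟨hbot, hne, hsup⟩, hnt⟩, hmin⟩ hc, hqc,
    minCover_witness ⟨⟨⟨hbot, hne, hsup⟩, hnt⟩, hmin⟩ hc⟩, hcxy⟩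

lemma no_escape (hL : WMJCRP L) {q x y : L} {S : Set L}
    (hq : SupIrred q) (hle : q ≤ x ⊔ y) (hx : ¬ q ≤ x) (hy : ¬ q ≤ y)
    (hS : ∀ c, JoinDep q c → c ∈ S)
    (H : ∀ c, SupIrred c → c ∈ S → c ≤ x ∨ c ≤ y → c ≤ y) : False := by
  obtain ⟨C, ⟨hne, hsup⟩, hall⟩ := cover_step hL hq hle hx hy
  have : q ≤ y := by
    refine hsup.trans (Finset.sup'_le _ _ fun c hc => ?_)
    obtain ⟨hdep, hcxy⟩ := hall c hc
    exact H c hdep.2.1 (hS c hdep) hcxy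
  exact hy this

end

/-- For a lattice with the weak minimal join-cover refinement property and `p`
join-irreducible, `dₚ(x ⊓ y, x) = dₚ(y, x ⊔ y)` for all `x, y`. -/
theorem dFun_transpose {L : Type*} [Lattice L] (hL : WMJCRP L)
    (p : L) (hp : SupIrred p) (x y : L) :
    dFun p (x ⊓ y) x = dFun p y (x ⊔ y) := by
  classical
  have c0 : (Jset (x ⊓ y) ∩ rtrCl p = Jset x ∩ rtrCl p) ↔
      (Jset y ∩ rtrCl p = Jset (x ⊔ y) ∩ rtrCl p) := by
    constructor
    · intro h
      apply Set.eq_of_subset_of_subset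
      · rintro q ⟨⟨hq, hqy⟩, hR⟩
        exact ⟨⟨hq, hqy.trans le_sup_right⟩, hR⟩
      · rintro q ⟨⟨hq, hqxy⟩, hR⟩
        refine ⟨⟨hq, ?_⟩, hR⟩
        by_cases hqy : q ≤ y
        · exact hqy
        by_cases hqx : q ≤ x
        · have hmem : q ∈ Jset (x ⊓ y) ∩ rtrCl p := by
            rw [h]; exact ⟨⟨hq, hqx⟩, hR⟩
          exact hmem.1.2.trans inf_le_right
        exact (no_escape hL hq hqxy hqx hqy (fun c hdc => hR.tail hdc)
          (fun c hc hcS hcxy => by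
            rcases hcxy with hcx | hcy
            · have hmem : c ∈ Jset (x ⊓ y) ∩ rtrCl p := by
                rw [h]; exact ⟨⟨hc, hcx⟩, hcS⟩
              exact hmem.1.2.trans inf_le_right
            · exact hcy)).elim
    · intro h
      apply Set.eq_of_subset_of_subset
      · rintro q ⟨⟨hq, hqm⟩, hR⟩
        exact ⟨⟨hq, hqm.trans inf_le_left⟩, hR⟩
      · rintro q ⟨⟨hq, hqx⟩, hR⟩
        have hmem : q ∈ Jset y ∩ rtrCl p := by
          rw [h]; exact ⟨⟨hq, hqx.trans le_sup_left⟩, hR⟩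
        exact ⟨⟨hq, le_inf hqx hmem.1.2⟩, hR⟩
  have c1 : (p ∈ Jset x ∧ p ∉ Jset (x ⊓ y) ∧ Jset (x ⊓ y) ∩ trCl p = Jset x ∩ trCl p) ↔
      (p ∈ Jset (x ⊔ y) ∧ p ∉ Jset y ∧ Jset y ∩ trCl p = Jset (x ⊔ y) ∩ trCl p) := by
    constructor
    · rintro ⟨⟨-, hpx⟩, hpnm, hT⟩
      refine ⟨⟨hp, hpx.trans le_sup_left⟩, fun hm => hpnm ⟨hp, le_inf hpx hm.2⟩, ?_⟩
      apply Set.eq_of_subset_of_subset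
      · rintro q ⟨⟨hq, hqy⟩, hTq⟩
        exact ⟨⟨hq, hqy.trans le_sup_right⟩, hTq⟩
      · rintro q ⟨⟨hq, hqxy⟩, hTq⟩
        refine ⟨⟨hq, ?_⟩, hTq⟩
        by_cases hqy : q ≤ y
        · exact hqy
        by_cases hqx : q ≤ x
        · have hmem : q ∈ Jset (x ⊓ y) ∩ trCl p := by
            rw [hT]; exact ⟨⟨hq, hqx⟩, hTq⟩
          exact hmem.1.2.trans inf_le_right
        exact (no_escape hL hq hqxy hqx hqy (fun c hdc => hTq.tail hdc)
          (fun c hc hcS hcxy => by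
            rcases hcxy with hcx | hcy
            · have hmem : c ∈ Jset (x ⊓ y) ∩ trCl p := by
                rw [hT]; exact ⟨⟨hc, hcx⟩, hcS⟩
              exact hmem.1.2.trans inf_le_right
            · exact hcy)).elim
    · rintro ⟨⟨-, hpxy⟩, hpny, hT⟩
      have hpny' : ¬ p ≤ y := fun hle => hpny ⟨hp, hle⟩
      have hpx : p ≤ x := by
        by_cases hpx : p ≤ x
        · exact hpx
        exact (no_escape hL hp hpxy hpx hpny'
          (fun c hdc => Relation.TransGen.single hdc)
          (fun c hc hcS hcxy => by
            have hcle : c ≤ x ⊔ y :=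
              hcxy.elim (fun hh => hh.trans le_sup_left) (fun hh => hh.trans le_sup_right)
            have hmem : c ∈ Jset y ∩ trCl p := by
              rw [hT]; exact ⟨⟨hc, hcle⟩, hcS⟩
            exact hmem.1.2)).elim
      refine ⟨⟨hp, hpx⟩, fun hm => hpny' (hm.2.trans inf_le_right), ?_⟩
      apply Set.eq_of_subset_of_subset
      · rintro q ⟨⟨hq, hqm⟩, hTq⟩
        exact ⟨⟨hq, hqm.trans inf_le_left⟩, hTq⟩
      · rintro q ⟨⟨hq, hqx⟩, hTq⟩
        have hmem : q ∈ Jset y ∩ trCl p := by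
          rw [hT]; exact ⟨⟨hq, hqx.trans le_sup_left⟩, hTq⟩
        exact ⟨⟨hq, le_inf hqx hmem.1.2⟩, hTq⟩
  simp only [dFun]
  rw [if_congr c0 rfl (if_congr c1 rfl rfl)]
end

section
/- Let L = Co(C₄) be the lattice of order-convex subsets of a 4-element chain c₁ < c₂ < c₃ < c₄, with atoms a = {c₂}, b = {c₁}, a' = {c₃}, b' = {c₄}. In the tensor product L ⊗ L (realized as compact bi-ideals of L × L), let H = (a⊗b) ∨ (b⊗a') ∨ (a'⊗b') ∨ (b'⊗a). Then (a⊗a) ∨ H = (a⊗a') ∨ H, yet (a⊗a) ∨ ((a⊗a) ∧ (a⊗a')) ∨ H = H ≠ (a⊗a) ∨ H; consequently L ⊗ L is not join-semidistributive. -/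
/-- The order-convex closure of a subset of a poset. -/
def convClosure {P : Type*} [Preorder P] (S : Set P) : Set P :=
  {p | ∃ u ∈ S, ∃ v ∈ S, u ≤ p ∧ p ≤ v}

theorem convClosure_ordConnected {P : Type*} [Preorder P] (S : Set P) :
    (convClosure S).OrdConnected := by
  constructor
  rintro x ⟨u, hu, v, hv, hux, hxv⟩ y ⟨u', hu', v', hv', hu'y, hyv'⟩ z hz
  exact ⟨u, hu, v', hv', le_trans hux hz.1, le_trans hz.2 hyv'⟩

/-- The lattice `L = Co(C₄)` of order-convex subsets of the 4-element chain. -/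
def Conv4 : Type := {X : Set (Fin 4) // X.OrdConnected}

instance : PartialOrder Conv4 := Subtype.partialOrder _

namespace Conv4

/-- Join in `Co(C₄)`: the convex closure of the union. -/
def sup (X Y : Conv4) : Conv4 := ⟨convClosure (X.1 ∪ Y.1), convClosure_ordConnected _⟩

/-- Meet in `Co(C₄)`: intersection. -/
def inf (X Y : Conv4) : Conv4 := ⟨X.1 ∩ Y.1, X.2.inter Y.2⟩

/-- Zero of `Co(C₄)`: the empty set. -/
def bot : Conv4 := ⟨∅, Set.ordConnected_empty⟩

/-- The bottom bi-ideal of `L × L`. -/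
def botBI : Set (Conv4 × Conv4) := {z | z.2 = bot} ∪ {z | z.1 = bot}

/-- Bi-ideals of `L × L`. -/
def IsBiIdeal (I : Set (Conv4 × Conv4)) : Prop :=
  botBI ⊆ I ∧ (∀ z w : Conv4 × Conv4, w ∈ I → z.1 ≤ w.1 → z.2 ≤ w.2 → z ∈ I) ∧
    (∀ u : Conv4, ∀ x y : Conv4, (u, x) ∈ I → (u, y) ∈ I → (u, sup x y) ∈ I) ∧
    (∀ x y : Conv4, ∀ u : Conv4, (x, u) ∈ I → (y, u) ∈ I → (sup x y, u) ∈ I)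

/-- The pure tensor `u ⊗ v`. -/
def pureT (u v : Conv4) : Set (Conv4 × Conv4) :=
  botBI ∪ {z | z.1 ≤ u ∧ z.2 ≤ v}

/-- The join in the lattice of bi-ideals (`= L ⊗ L`, since `L` is finite). -/
def biSup (H K : Set (Conv4 × Conv4)) : Set (Conv4 × Conv4) :=
  ⋂₀ {J : Set (Conv4 × Conv4) | IsBiIdeal J ∧ H ∪ K ⊆ J}

/-- The atoms `a = {c₂}`, `b = {c₁}`, `a' = {c₃}`, `b' = {c₄}` of `Co(C₄)`. -/
def atomA : Conv4 := ⟨{(1 : Fin 4)}, Set.ordConnected_singleton⟩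
def atomB : Conv4 := ⟨{(0 : Fin 4)}, Set.ordConnected_singleton⟩
def atomA' : Conv4 := ⟨{(2 : Fin 4)}, Set.ordConnected_singleton⟩
def atomB' : Conv4 := ⟨{(3 : Fin 4)}, Set.ordConnected_singleton⟩

/-- `H = (a⊗b) ∨ (b⊗a') ∨ (a'⊗b') ∨ (b'⊗a)`. -/
def H : Set (Conv4 × Conv4) :=
  biSup (biSup (biSup (pureT atomA atomB) (pureT atomB atomA'))
      (pureT atomA' atomB')) (pureT atomB' atomA)

end Conv4

namespace Conv4

lemma le_sup_left (X Y : Conv4) : X ≤ sup X Y :=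
  fun p hp => ⟨p, Or.inl hp, p, Or.inl hp, le_refl _, le_refl _⟩

lemma le_sup_right (X Y : Conv4) : Y ≤ sup X Y :=
  fun p hp => ⟨p, Or.inr hp, p, Or.inr hp, le_refl _, le_refl _⟩

lemma sup_le {X Y Z : Conv4} (hx : X ≤ Z) (hy : Y ≤ Z) : sup X Y ≤ Z := by
  rintro p ⟨u, hu, v, hv, hup, hpv⟩
  have hu' : u ∈ Z.1 := hu.elim (fun h => hx h) (fun h => hy h)
  have hv' : v ∈ Z.1 := hv.elim (fun h => hx h) (fun h => hy h)
  exact Z.2.out hu' hv' ⟨hup, hpv⟩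

lemma bot_le (X : Conv4) : bot ≤ X := fun p hp => hp.elim

lemma le_bot {X : Conv4} (h : X ≤ bot) : X = bot :=
  Subtype.ext (Set.eq_empty_iff_forall_notMem.2 fun p hp => (h hp))

lemma isBiIdeal_biSup (A B : Set (Conv4 × Conv4)) : IsBiIdeal (biSup A B) := by
  refine ⟨?_, ?_, ?_, ?_⟩
  · intro z hz
    exact Set.mem_sInter.2 fun J hJ => hJ.1.1 hz
  · intro z w hw h1 h2
    exact Set.mem_sInter.2 fun J hJ => hJ.1.2.1 z w (Set.mem_sInter.1 hw J hJ) h1 h2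
  · intro u x y hx hy
    exact Set.mem_sInter.2 fun J hJ =>
      hJ.1.2.2.1 u x y (Set.mem_sInter.1 hx J hJ) (Set.mem_sInter.1 hy J hJ)
  · intro x y u hx hy
    exact Set.mem_sInter.2 fun J hJ =>
      hJ.1.2.2.2 x y u (Set.mem_sInter.1 hx J hJ) (Set.mem_sInter.1 hy J hJ)

lemma subset_biSup_left {A B : Set (Conv4 × Conv4)} : A ⊆ biSup A B :=
  fun z hz => Set.mem_sInter.2 fun _J hJ => hJ.2 (Or.inl hz)

lemma subset_biSup_right {A B : Set (Conv4 × Conv4)} : B ⊆ biSup A B :=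
  fun z hz => Set.mem_sInter.2 fun _J hJ => hJ.2 (Or.inr hz)

lemma biSup_le {A B J : Set (Conv4 × Conv4)} (hJ : IsBiIdeal J) (h : A ∪ B ⊆ J) :
    biSup A B ⊆ J :=
  Set.sInter_subset_of_mem ⟨hJ, h⟩

lemma biSup_comm (A B : Set (Conv4 × Conv4)) : biSup A B = biSup B A := by
  unfold biSup
  rw [Set.union_comm]

lemma isBiIdeal_pureT (u v : Conv4) : IsBiIdeal (pureT u v) := by
  refine ⟨Set.subset_union_left, ?_, ?_, ?_⟩
  · rintro z w (hw | ⟨h1, h2⟩) hz1 hz2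
    · rcases hw with hw | hw
      · exact Or.inl (Or.inl (le_bot (hw ▸ hz2)))
      · exact Or.inl (Or.inr (le_bot (hw ▸ hz1)))
    · exact Or.inr ⟨le_trans hz1 h1, le_trans hz2 h2⟩
  · rintro u0 x y (hx | ⟨hx1, hx2⟩) hy
    · rcases hx with hx | hx
      · rcases hy with (hy | hy) | ⟨hy1, hy2⟩
        · exact Or.inl (Or.inl (le_bot (sup_le (le_of_eq hx) (le_of_eq hy))))
        · exact Or.inl (Or.inr hy)
        · exact Or.inr ⟨hy1, sup_le (le_trans (le_of_eq hx) (bot_le _)) hy2⟩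
      · exact Or.inl (Or.inr hx)
    · rcases hy with (hy | hy) | ⟨hy1, hy2⟩
      · exact Or.inr ⟨hx1, sup_le hx2 (le_trans (le_of_eq hy) (bot_le _))⟩
      · exact Or.inl (Or.inr hy)
      · exact Or.inr ⟨hx1, sup_le hx2 hy2⟩
  · rintro x y u0 (hx | ⟨hx1, hx2⟩) hy
    · rcases hx with hx | hx
      · exact Or.inl (Or.inl hx)
      · rcases hy with (hy | hy) | ⟨hy1, hy2⟩
        · exact Or.inl (Or.inl hy)
        · exact Or.inl (Or.inr (le_bot (sup_le (le_of_eq hx) (le_of_eq hy))))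
        · exact Or.inr ⟨sup_le (le_trans (le_of_eq hx) (bot_le _)) hy1, hy2⟩
    · rcases hy with (hy | hy) | ⟨hy1, hy2⟩
      · exact Or.inl (Or.inl hy)
      · exact Or.inr ⟨sup_le hx1 (le_trans (le_of_eq hy) (bot_le _)), hx2⟩
      · exact Or.inr ⟨sup_le hx1 hy1, hx2⟩

/-- first coordinates of the four generators of `H` -/
def av : Fin 4 → Fin 4 := ![1, 0, 2, 3]
/-- second coordinates of the four generators of `H` -/
def bv : Fin 4 → Fin 4 := ![0, 2, 3, 1]

def AV (i : Fin 4) : Conv4 := ⟨{av i}, Set.ordConnected_singleton⟩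
def BV (i : Fin 4) : Conv4 := ⟨{bv i}, Set.ordConnected_singleton⟩

lemma av_inj : ∀ {i j : Fin 4}, av i = av j → i = j := by decide
lemma bv_inj : ∀ {i j : Fin 4}, bv i = bv j → i = j := by decide

lemma eq_bot_of_le_AV {u : Conv4} {i j : Fin 4} (hij : i ≠ j)
    (h1 : u ≤ AV i) (h2 : u ≤ AV j) : u = bot :=
  le_bot fun p hp => absurd (av_inj (((h1 hp : p ∈ ({av i} : Set (Fin 4)))).symm.trans
    (h2 hp : p ∈ ({av j} : Set (Fin 4))))) hij

lemma eq_bot_of_le_BV {u : Conv4} {i j : Fin 4} (hij : i ≠ j)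
    (h1 : u ≤ BV i) (h2 : u ≤ BV j) : u = bot :=
  le_bot fun p hp => absurd (bv_inj (((h1 hp : p ∈ ({bv i} : Set (Fin 4)))).symm.trans
    (h2 hp : p ∈ ({bv j} : Set (Fin 4))))) hij

/-- An explicit bi-ideal: the set-union of the four pure tensors generating `H`. -/
def J0 : Set (Conv4 × Conv4) :=
  botBI ∪ {z | ∃ i : Fin 4, z.1 ≤ AV i ∧ z.2 ≤ BV i}

lemma isBiIdeal_J0 : IsBiIdeal J0 := by
  refine ⟨Set.subset_union_left, ?_, ?_, ?_⟩
  · rintro z w (hw | ⟨i, h1, h2⟩) hz1 hz2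
    · rcases hw with hw | hw
      · exact Or.inl (Or.inl (le_bot (hw ▸ hz2)))
      · exact Or.inl (Or.inr (le_bot (hw ▸ hz1)))
    · exact Or.inr ⟨i, le_trans hz1 h1, le_trans hz2 h2⟩
  · rintro u x y (hx | ⟨i, hi1, hi2⟩) hy
    · rcases hx with hx | hx
      · rcases hy with (hy | hy) | ⟨j, hj1, hj2⟩
        · exact Or.inl (Or.inl (le_bot (sup_le (le_of_eq hx) (le_of_eq hy))))
        · exact Or.inl (Or.inr hy)
        · exact Or.inr ⟨j, hj1, sup_le (le_trans (le_of_eq hx) (bot_le _)) hj2⟩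
      · exact Or.inl (Or.inr hx)
    · rcases hy with (hy | hy) | ⟨j, hj1, hj2⟩
      · exact Or.inr ⟨i, hi1, sup_le hi2 (le_trans (le_of_eq hy) (bot_le _))⟩
      · exact Or.inl (Or.inr hy)
      · by_cases hij : i = j
        · subst hij
          exact Or.inr ⟨i, hi1, sup_le hi2 hj2⟩
        · exact Or.inl (Or.inr (eq_bot_of_le_AV hij hi1 hj1))
  · rintro x y u (hx | ⟨i, hi1, hi2⟩) hy
    · rcases hx with hx | hx
      · exact Or.inl (Or.inl hx)
      · rcases hy with (hy | hy) | ⟨j, hj1, hj2⟩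
        · exact Or.inl (Or.inl hy)
        · exact Or.inl (Or.inr (le_bot (sup_le (le_of_eq hx) (le_of_eq hy))))
        · exact Or.inr ⟨j, sup_le (le_trans (le_of_eq hx) (bot_le _)) hj1, hj2⟩
    · rcases hy with (hy | hy) | ⟨j, hj1, hj2⟩
      · exact Or.inl (Or.inl hy)
      · exact Or.inr ⟨i, sup_le hi1 (le_trans (le_of_eq hy) (bot_le _)), hi2⟩
      · by_cases hij : i = j
        · subst hij
          exact Or.inr ⟨i, sup_le hi1 hj1, hi2⟩
        · exact Or.inl (Or.inl (eq_bot_of_le_BV hij hi2 hj2))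

lemma pureT_subset_J0 (i : Fin 4) : pureT (AV i) (BV i) ⊆ J0 := by
  rintro z (hz | ⟨h1, h2⟩)
  · exact Or.inl hz
  · exact Or.inr ⟨i, h1, h2⟩

lemma H_subset_J0 : H ⊆ J0 := by
  have h1 : pureT atomA atomB ⊆ J0 := pureT_subset_J0 0
  have h2 : pureT atomB atomA' ⊆ J0 := pureT_subset_J0 1
  have h3 : pureT atomA' atomB' ⊆ J0 := pureT_subset_J0 2
  have h4 : pureT atomB' atomA ⊆ J0 := pureT_subset_J0 3
  have h12 : biSup (pureT atomA atomB) (pureT atomB atomA') ⊆ J0 :=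
    biSup_le isBiIdeal_J0 (Set.union_subset h1 h2)
  have h123 : biSup (biSup (pureT atomA atomB) (pureT atomB atomA'))
      (pureT atomA' atomB') ⊆ J0 := biSup_le isBiIdeal_J0 (Set.union_subset h12 h3)
  exact biSup_le isBiIdeal_J0 (Set.union_subset h123 h4)

lemma atomA_ne_bot : atomA ≠ bot := by
  intro h
  have := congrArg Subtype.val h
  exact Set.singleton_ne_empty (1 : Fin 4) this

lemma not_mem_H : (atomA, atomA) ∉ H := by
  intro hmem
  rcases H_subset_J0 hmem with (h | h) | ⟨i, h1, h2⟩
  · exact atomA_ne_bot h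
  · exact atomA_ne_bot h
  · have e1 : av i = 1 := ((h1 (rfl : (1 : Fin 4) ∈ ({1} : Set (Fin 4)))) :
      (1 : Fin 4) ∈ ({av i} : Set (Fin 4))).symm
    have e2 : bv i = 1 := ((h2 (rfl : (1 : Fin 4) ∈ ({1} : Set (Fin 4)))) :
      (1 : Fin 4) ∈ ({bv i} : Set (Fin 4))).symm
    have : ¬ ∃ i : Fin 4, av i = 1 ∧ bv i = 1 := by decide
    exact this ⟨i, e1, e2⟩

lemma a_le_sup_a'_b : atomA ≤ sup atomA' atomB := by
  intro p hp
  have hp1 : p = (1 : Fin 4) := hp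
  subst hp1
  exact ⟨0, Or.inr rfl, 2, Or.inl rfl, by decide, by decide⟩

lemma a'_le_sup_a_b' : atomA' ≤ sup atomA atomB' := by
  intro p hp
  have hp1 : p = (2 : Fin 4) := hp
  subst hp1
  exact ⟨1, Or.inl rfl, 3, Or.inr rfl, by decide, by decide⟩

lemma a_le_sup_b_a' : atomA ≤ sup atomB atomA' := by
  intro p hp
  have hp1 : p = (1 : Fin 4) := hp
  subst hp1
  exact ⟨0, Or.inl rfl, 2, Or.inr rfl, by decide, by decide⟩

lemma P1_subset_H : pureT atomA atomB ⊆ H :=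
  Set.Subset.trans subset_biSup_left (Set.Subset.trans subset_biSup_left subset_biSup_left)

lemma P2_subset_H : pureT atomB atomA' ⊆ H :=
  Set.Subset.trans subset_biSup_right (Set.Subset.trans subset_biSup_left subset_biSup_left)

lemma P3_subset_H : pureT atomA' atomB' ⊆ H :=
  Set.Subset.trans subset_biSup_right subset_biSup_left

lemma P4_subset_H : pureT atomB' atomA ⊆ H :=
  subset_biSup_right

lemma mem_pureT_self (u v : Conv4) : (u, v) ∈ pureT u v := Or.inr ⟨le_refl _, le_refl _⟩

lemma isBiIdeal_H : IsBiIdeal H := isBiIdeal_biSup _ _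

lemma pure_aa_subset : pureT atomA atomA ⊆ biSup (pureT atomA atomA') H := by
  have hI := isBiIdeal_biSup (pureT atomA atomA') H
  have m1 : (atomA, atomA') ∈ biSup (pureT atomA atomA') H :=
    subset_biSup_left (mem_pureT_self _ _)
  have m2 : (atomA, atomB) ∈ biSup (pureT atomA atomA') H :=
    subset_biSup_right (P1_subset_H (mem_pureT_self _ _))
  have m3 : (atomA, sup atomA' atomB) ∈ biSup (pureT atomA atomA') H :=
    hI.2.2.1 atomA atomA' atomB m1 m2
  have m4 : (atomA, atomA) ∈ biSup (pureT atomA atomA') H :=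
    hI.2.1 (atomA, atomA) (atomA, sup atomA' atomB) m3 (le_refl _) a_le_sup_a'_b
  rintro z (hz | ⟨h1, h2⟩)
  · exact hI.1 hz
  · exact hI.2.1 z (atomA, atomA) m4 h1 h2

lemma pure_aa'_subset : pureT atomA atomA' ⊆ biSup (pureT atomA atomA) H := by
  have hI := isBiIdeal_biSup (pureT atomA atomA) H
  have m1 : (atomA, atomA) ∈ biSup (pureT atomA atomA) H :=
    subset_biSup_left (mem_pureT_self _ _)
  have m2 : (atomB', atomA) ∈ biSup (pureT atomA atomA) H :=
    subset_biSup_right (P4_subset_H (mem_pureT_self _ _))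
  have m3 : (sup atomA atomB', atomA) ∈ biSup (pureT atomA atomA) H :=
    hI.2.2.2 atomA atomB' atomA m1 m2
  have m4 : (atomA', atomA) ∈ biSup (pureT atomA atomA) H :=
    hI.2.1 (atomA', atomA) (sup atomA atomB', atomA) m3 a'_le_sup_a_b' (le_refl _)
  have m5 : (atomA', atomB') ∈ biSup (pureT atomA atomA) H :=
    subset_biSup_right (P3_subset_H (mem_pureT_self _ _))
  have m6 : (atomA', sup atomA atomB') ∈ biSup (pureT atomA atomA) H :=
    hI.2.2.1 atomA' atomA atomB' m4 m5
  have m7 : (atomA', atomA') ∈ biSup (pureT atomA atomA) H :=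
    hI.2.1 (atomA', atomA') (atomA', sup atomA atomB') m6 (le_refl _) a'_le_sup_a_b'
  have m8 : (atomB, atomA') ∈ biSup (pureT atomA atomA) H :=
    subset_biSup_right (P2_subset_H (mem_pureT_self _ _))
  have m9 : (sup atomB atomA', atomA') ∈ biSup (pureT atomA atomA) H :=
    hI.2.2.2 atomB atomA' atomA' m8 m7
  have m10 : (atomA, atomA') ∈ biSup (pureT atomA atomA) H :=
    hI.2.1 (atomA, atomA') (sup atomB atomA', atomA') m9 a_le_sup_b_a' (le_refl _)
  rintro z (hz | ⟨h1, h2⟩)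
  · exact hI.1 hz
  · exact hI.2.1 z (atomA, atomA') m10 h1 h2

lemma statement1 : biSup (pureT atomA atomA) H = biSup (pureT atomA atomA') H :=
  Set.Subset.antisymm
    (biSup_le (isBiIdeal_biSup _ _) (Set.union_subset pure_aa_subset subset_biSup_right))
    (biSup_le (isBiIdeal_biSup _ _) (Set.union_subset pure_aa'_subset subset_biSup_right))

lemma inter_eq_botBI : pureT atomA atomA ∩ pureT atomA atomA' = botBI := by
  apply Set.Subset.antisymm
  · rintro z ⟨hz1, hz2⟩
    rcases hz1 with hz1 | ⟨h1, h2⟩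
    · exact hz1
    rcases hz2 with hz2 | ⟨h1', h2'⟩
    · exact hz2
    refine Or.inl (le_bot fun p hp => ?_)
    have e1 : p = (1 : Fin 4) := h2 hp
    have e2 : p = (2 : Fin 4) := h2' hp
    exact absurd (e1.symm.trans e2) (by decide)
  · intro z hz
    exact ⟨Or.inl hz, Or.inl hz⟩

lemma statement2 : biSup (pureT atomA atomA ∩ pureT atomA atomA') H = H := by
  rw [inter_eq_botBI]
  exact Set.Subset.antisymm
    (biSup_le isBiIdeal_H (Set.union_subset isBiIdeal_H.1 (le_refl _)))
    subset_biSup_right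

lemma statement3 : biSup (pureT atomA atomA) H ≠ H := by
  intro heq
  exact not_mem_H (heq ▸ subset_biSup_left (mem_pureT_self atomA atomA))

end Conv4

open Conv4 in
/-- In `L ⊗ L` for `L = Co(C₄)`: `(a⊗a) ∨ H = (a⊗a') ∨ H`, yet
`((a⊗a) ∧ (a⊗a')) ∨ H = H ≠ (a⊗a) ∨ H`; consequently `L ⊗ L` is not
join-semidistributive. -/
theorem conv4_tensor_not_joinSemidistributive :
    biSup (pureT atomA atomA) H = biSup (pureT atomA atomA') H ∧
    biSup (pureT atomA atomA ∩ pureT atomA atomA') H = H ∧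
    biSup (pureT atomA atomA) H ≠ H ∧
    ¬ (∀ X Y Z : Set (Conv4 × Conv4), IsBiIdeal X → IsBiIdeal Y → IsBiIdeal Z →
        biSup X Y = biSup X Z → biSup X Y = biSup X (Y ∩ Z)) := by
  refine ⟨statement1, statement2, statement3, ?_⟩
  intro hJSD
  have hyp : biSup H (pureT atomA atomA) = biSup H (pureT atomA atomA') :=
    (biSup_comm H _).trans (statement1.trans (biSup_comm _ H))
  have h4 := hJSD H (pureT atomA atomA) (pureT atomA atomA') isBiIdeal_H
    (isBiIdeal_pureT _ _) (isBiIdeal_pureT _ _) hyp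
  have h5 : biSup (pureT atomA atomA) H = H := by
    rw [biSup_comm, h4, biSup_comm]
    exact statement2
  exact statement3 h5
end
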